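/- arXiv:2305.05317 — 11 statements merged into one kernel-verified Lean document; each statement's English description precedes it below -/
import Mathlib

section
/- Let q be a prime power, k a positive integer, and D = (d_1, …, d_n) a list of vectors in F_q^k whose span is all of F_q^k. For y ∈ F_q^k \ {0}, the codeword c(y) is minimal in C(D) if and only if dim V(y, D) = k − 1. -/
/-!
Let `V = V(y, D)` and let `V⊥` be its orthogonal complement for the dot product, so that
`dim V + dim V⊥ = k`. A codeword `c(x)` is covered by `c(y)` exactly when `x` is orthogonal to
every `d ∈ D` with `y · d = 0`, i.e. when `x ∈ V⊥`; and since `D` spans `F^k`, `c(x) = a • c(y)`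
holds exactly when `x = a • y`. Hence `c(y)` is minimal iff `V⊥ ⊆ F y`, and as `y ∈ V⊥` this
means `dim V⊥ = 1`, i.e. `dim V = k - 1`.
-/

open Module Submodule Matrix

namespace Submodule

variable {K W : Type*} [Field K] [AddCommGroup W] [Module K W]

theorem le_span_singleton_iff_finrank_eq_one {U : Submodule K W} [FiniteDimensional K U]
    {y : W} (hy : y ≠ 0) (hyU : y ∈ U) : U ≤ K ∙ y ↔ finrank K U = 1 := by
  have hyle : K ∙ y ≤ U := (span_singleton_le_iff_mem y U).2 hyU
  constructor
  · intro hle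
    rw [le_antisymm hle hyle, finrank_span_singleton hy]
  · intro h
    exact (eq_of_le_of_finrank_eq hyle (by rw [h, finrank_span_singleton hy])).ge

end Submodule

section DotOrthogonal

variable {K ι : Type*} [Field K] [Fintype ι] [DecidableEq ι]

def dotOrthogonal (V : Submodule K (ι → K)) : Submodule K (ι → K) :=
  V.dualAnnihilator.comap (dotProductEquiv K ι).toLinearMap

theorem mem_dotOrthogonal {V : Submodule K (ι → K)} {x : ι → K} :
    x ∈ dotOrthogonal V ↔ ∀ v ∈ V, x ⬝ᵥ v = 0 :=
  mem_dualAnnihilator _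

theorem mem_dotOrthogonal_span {s : Set (ι → K)} {x : ι → K} :
    x ∈ dotOrthogonal (span K s) ↔ ∀ v ∈ s, x ⬝ᵥ v = 0 := by
  rw [mem_dotOrthogonal]
  exact span_le (p := LinearMap.ker (dotProductEquiv K ι x))

theorem finrank_add_finrank_dotOrthogonal (V : Submodule K (ι → K)) :
    finrank K V + finrank K (dotOrthogonal V) = Fintype.card ι := by
  rw [dotOrthogonal, comap_equiv_eq_map_symm, LinearEquiv.finrank_map_eq,
    Subspace.finrank_add_finrank_dualAnnihilator_eq, finrank_fintype_fun_eq_card]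

theorem dotProduct_left_injective {ι' : Type*} {D : ι' → ι → K}
    (hspan : span K (Set.range D) = ⊤) : Function.Injective fun x i => x ⬝ᵥ D i := by
  intro x z h
  exact (dotProductEquiv K ι).injective (LinearMap.ext_on_range hspan fun i => congrFun h i)

end DotOrthogonal

theorem minimal_iff_finrank_eq_general
    (F : Type) [Field F]
    (k n : ℕ) (hk : 0 < k)
    (D : Fin n → (Fin k → F))
    (hspan : Submodule.span F (Set.range D) = ⊤)
    (y : Fin k → F) (hy : y ≠ 0) :
    (∀ x : Fin k → F,
        (∀ i : Fin n, (∑ j, x j * D i j) ≠ 0 → (∑ j, y j * D i j) ≠ 0) →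
        ∃ a : F, (fun i : Fin n => ∑ j, x j * D i j)
            = a • (fun i : Fin n => ∑ j, y j * D i j)) ↔
      Module.finrank F
        (Submodule.span F {v : Fin k → F | v ∈ Set.range D ∧ (∑ j, y j * v j) = 0})
        = k - 1 := by
  set V := span F {v : Fin k → F | v ∈ Set.range D ∧ y ⬝ᵥ v = 0}
  have hW : ∀ x, x ∈ dotOrthogonal V ↔ ∀ i, y ⬝ᵥ D i = 0 → x ⬝ᵥ D i = 0 := fun x => by
    simp only [V, mem_dotOrthogonal_span, Set.mem_ofPred_eq, and_imp, Set.forall_mem_range]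
  have hcover : ∀ x, (∀ i, x ⬝ᵥ D i ≠ 0 → y ⬝ᵥ D i ≠ 0) ↔ x ∈ dotOrthogonal V := fun x => by
    rw [hW]
    exact forall_congr' fun i => not_imp_not
  have hmultiple : ∀ x (a : F), ((fun i => x ⬝ᵥ D i) = a • fun i => y ⬝ᵥ D i) ↔ a • y = x :=
    fun x a => by
      have hsmul : (a • fun i => y ⬝ᵥ D i) = fun i => (a • y) ⬝ᵥ D i :=
        funext fun i => (smul_dotProduct a y (D i)).symm
      rw [hsmul, (dotProduct_left_injective hspan).eq_iff, eq_comm]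
  have hdim := finrank_add_finrank_dotOrthogonal V
  rw [Fintype.card_fin] at hdim
  calc (∀ x, (∀ i, x ⬝ᵥ D i ≠ 0 → y ⬝ᵥ D i ≠ 0) →
        ∃ a : F, (fun i => x ⬝ᵥ D i) = a • fun i => y ⬝ᵥ D i)
      ↔ dotOrthogonal V ≤ F ∙ y := by
        simp only [hcover, hmultiple, SetLike.le_def, mem_span_singleton]
    _ ↔ finrank F (dotOrthogonal V) = 1 :=
        le_span_singleton_iff_finrank_eq_one hy ((hW y).2 fun _ => id)
    _ ↔ finrank F V = k - 1 := by
        constructor <;> intro <;> omega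

/-- Let `D = (d_1, …, d_n)` be a list of vectors spanning `F_q^k` (here an
arbitrary finite field `F`).  For `y ≠ 0`, the codeword `c(y)` is minimal in
`C(D)` (every codeword `c(x)` covered by `c(y)` is a scalar multiple of `c(y)`)
iff `dim V(y, D) = k - 1`, where `V(y, D)` is the span of
`H(y, D) = {d ∈ D : y·d = 0}`. -/
theorem minimal_iff_finrank_eq
    (F : Type) [Field F] [Fintype F]
    (k n : ℕ) (hk : 0 < k)
    (D : Fin n → (Fin k → F))
    (hspan : Submodule.span F (Set.range D) = ⊤)
    (y : Fin k → F) (hy : y ≠ 0) :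
    (∀ x : Fin k → F,
        (∀ i : Fin n, (∑ j, x j * D i j) ≠ 0 → (∑ j, y j * D i j) ≠ 0) →
        ∃ a : F, (fun i : Fin n => ∑ j, x j * D i j)
            = a • (fun i : Fin n => ∑ j, y j * D i j)) ↔
      Module.finrank F
        (Submodule.span F {v : Fin k → F | v ∈ Set.range D ∧ (∑ j, y j * v j) = 0})
        = k - 1 :=
  minimal_iff_finrank_eq_general F k n hk D hspan y hy
end

section
/- Let q be a prime power and k a positive integer. Let M ⊆ N be two finite multisets of vectors in F_q^k such that both M and N span F_q^k. If the linear code C(M) is minimal, then the linear code C(N) is minimal. -/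
lemma eq_zero_of_dot_span_eq_top
    (F : Type) [Field F] (k : ℕ) (x : Fin k → F) (S : Set (Fin k → F))
    (hS : Submodule.span F S = ⊤) (h : ∀ d ∈ S, (∑ j, x j * d j) = 0) :
    x = 0 := by
  have key : ∀ d : Fin k → F, (∑ j, x j * d j) = 0 := by
    intro d
    have hd : d ∈ Submodule.span F S := hS ▸ Submodule.mem_top
    induction hd using Submodule.span_induction with
    | mem d hd => exact h d hd
    | zero => simp
    | add a b _ _ ha hb =>
        simp only [Pi.add_apply, mul_add, Finset.sum_add_distrib, ha, hb, add_zero]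
    | smul c a _ ha =>
        simp only [Pi.smul_apply, smul_eq_mul, mul_left_comm, ← Finset.mul_sum, ha,
          mul_zero]
  funext i
  simpa [Pi.single_apply, mul_ite, Finset.sum_ite_eq'] using key (Pi.single i 1)

/-- Let `M ≤ N` be two finite multisets of vectors in `F_q^k` (here an
arbitrary finite field `F`), both spanning `F_q^k`.  If the code `C(M)` is
minimal (every nonzero codeword covers only its scalar multiples), then `C(N)`
is minimal.  Covering of codewords is expressed by support inclusion over the
coordinates, i.e. over the multiset elements. -/
theorem minimal_code_of_sub_multiset
    (F : Type) [Field F] [Fintype F]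
    (k : ℕ) (hk : 0 < k)
    (M N : Multiset (Fin k → F)) (hMN : M ≤ N)
    (hM : Submodule.span F {v : Fin k → F | v ∈ M} = ⊤)
    (hN : Submodule.span F {v : Fin k → F | v ∈ N} = ⊤)
    (hmin : ∀ x : Fin k → F,
        (∃ d ∈ M, (∑ j, x j * d j) ≠ 0) →
        ∀ x' : Fin k → F,
          (∀ d ∈ M, (∑ j, x' j * d j) ≠ 0 → (∑ j, x j * d j) ≠ 0) →
          ∃ a : F, ∀ d ∈ M, (∑ j, x' j * d j) = a * (∑ j, x j * d j)) :
    ∀ x : Fin k → F,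
        (∃ d ∈ N, (∑ j, x j * d j) ≠ 0) →
        ∀ x' : Fin k → F,
          (∀ d ∈ N, (∑ j, x' j * d j) ≠ 0 → (∑ j, x j * d j) ≠ 0) →
          ∃ a : F, ∀ d ∈ N, (∑ j, x' j * d j) = a * (∑ j, x j * d j) := by
  intro x hne x' hcov
  obtain ⟨d0, hd0, hd0ne⟩ := hne
  have hsub : ∀ d : Fin k → F, d ∈ M → d ∈ N := fun d hd => Multiset.mem_of_le hMN hd
  -- x is nonzero on some element of M
  have hxM : ∃ d ∈ M, (∑ j, x j * d j) ≠ 0 := by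
    by_contra hc
    push_neg at hc
    have hx0 : x = 0 := eq_zero_of_dot_span_eq_top F k x _ hM hc
    apply hd0ne
    simp [hx0]
  obtain ⟨a, ha⟩ := hmin x hxM x' (fun d hd => hcov d (hsub d hd))
  have hx' : x' = a • x := by
    have : x' - a • x = 0 := by
      apply eq_zero_of_dot_span_eq_top F k _ _ hM
      intro d hd
      simp only [Pi.sub_apply, Pi.smul_apply, smul_eq_mul, sub_mul, Finset.sum_sub_distrib,
        mul_assoc, ← Finset.mul_sum]
      rw [ha d hd]
      ring
    exact sub_eq_zero.mp this
  refine ⟨a, fun d hd => ?_⟩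
  rw [hx']
  simp only [Pi.smul_apply, smul_eq_mul, mul_assoc, ← Finset.mul_sum]
end

section
/- Let m > 2 and l ≥ 2 be integers and n = m + l. Then the binary linear code C(D_0) is a minimal code, i.e., every nonzero codeword of C(D_0) is minimal. -/
/-- Dot product on `F_2^m × F_2^l ≅ F_2^n` (`n = m + l`). -/
def dotp {m l : ℕ} (x d : (Fin m → ZMod 2) × (Fin l → ZMod 2)) : ZMod 2 :=
  (∑ j, x.1 j * d.1 j) + (∑ j, x.2 j * d.2 j)

/-- `D_0 = {(β, γ) : β ≠ (1,…,1), γ ≠ 0}`. -/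
def D0 (m l : ℕ) : Set ((Fin m → ZMod 2) × (Fin l → ZMod 2)) :=
  {d | d.1 ≠ (fun _ => 1) ∧ d.2 ≠ 0}

/-- The binary code `C(D)` with defining set `D` is minimal: for every `x` with
`c(x) ≠ 0` and every `x'` with `Suppt(c(x')) ⊆ Suppt(c(x))`, the codeword
`c(x')` equals `0` or `c(x)` (coordinatewise over `D`). -/
def IsMinimalCode {m l : ℕ} (D : Set ((Fin m → ZMod 2) × (Fin l → ZMod 2))) : Prop :=
  ∀ x : (Fin m → ZMod 2) × (Fin l → ZMod 2),
    (∃ d ∈ D, dotp x d ≠ 0) →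
    ∀ x' : (Fin m → ZMod 2) × (Fin l → ZMod 2),
      (∀ d ∈ D, dotp x' d ≠ 0 → dotp x d ≠ 0) →
      ((∀ d ∈ D, dotp x' d = 0) ∨ (∀ d ∈ D, dotp x' d = dotp x d))

/-- `D_1 = {((1,…,1), γ) : Suppt(γ) ⊄ B_i for every i}`. -/
def D1 (m : ℕ) {l t : ℕ} (B : Fin t → Finset (Fin l)) :
    Set ((Fin m → ZMod 2) × (Fin l → ZMod 2)) :=
  {d | d.1 = (fun _ => 1) ∧ ∀ i : Fin t, ¬ ({j | d.2 j ≠ 0} ⊆ ↑(B i))}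

namespace D0aux

def dot {k : ℕ} (a b : Fin k → ZMod 2) : ZMod 2 := ∑ j, a j * b j

lemma zmod2_cases (t : ZMod 2) : t = 0 ∨ t = 1 := by revert t; decide

lemma zmod2_ne {t : ZMod 2} (h : t ≠ 0) : t = 1 := by
  rcases zmod2_cases t with h0 | h1
  · exact absurd h0 h
  · exact h1

lemma dot_single {k : ℕ} (a : Fin k → ZMod 2) (i : Fin k) :
    dot a (Pi.single i 1) = a i := by
  unfold dot
  rw [Fintype.sum_eq_single i]
  · simp
  · intro b hb; simp [Pi.single_eq_of_ne hb]

lemma dot_add_left {k : ℕ} (x y a : Fin k → ZMod 2) :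
    dot (x + y) a = dot x a + dot y a := by
  simp [dot, add_mul, Finset.sum_add_distrib]

lemma dot_add_right {k : ℕ} (a x y : Fin k → ZMod 2) :
    dot a (x + y) = dot a x + dot a y := by
  simp [dot, mul_add, Finset.sum_add_distrib]

lemma dot_zero_right {k : ℕ} (a : Fin k → ZMod 2) : dot a 0 = 0 := by simp [dot]

lemma dot_zero_left {k : ℕ} (a : Fin k → ZMod 2) : dot 0 a = 0 := by simp [dot]

lemma exists_one {k : ℕ} {a : Fin k → ZMod 2} (ha : a ≠ 0) : ∃ i, a i = 1 := by
  obtain ⟨i, hi⟩ := Function.ne_iff.mp ha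
  exact ⟨i, zmod2_ne hi⟩

lemma exists_third {k : ℕ} (hk : 2 < k) (i j : Fin k) : ∃ r, r ≠ i ∧ r ≠ j := by
  by_contra hc
  push_neg at hc
  have hsub : (Finset.univ : Finset (Fin k)) ⊆ {i, j} := by
    intro r _
    by_cases hri : r = i
    · simp [hri]
    · simp [hc r hri]
  have h1 := Finset.card_le_card hsub
  have h2 : ({i, j} : Finset (Fin k)).card ≤ 2 := Finset.card_insert_le _ _ |>.trans (by simp)
  simp [Finset.card_univ] at h1
  omega

lemma exists_second {k : ℕ} (hk : 2 ≤ k) (i : Fin k) : ∃ j, j ≠ i := by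
  haveI : Nontrivial (Fin k) := ⟨⟨0, by omega⟩, ⟨1, by omega⟩, by simp [Fin.ext_iff]⟩
  exact exists_ne i

lemma solve_one {k : ℕ} (hk : 2 ≤ k) {a : Fin k → ZMod 2} (ha : a ≠ 0) (t : ZMod 2) :
    ∃ β, β ≠ (fun _ => 1) ∧ dot a β = t := by
  rcases zmod2_cases t with ht | ht
  · refine ⟨0, ?_, by simp [dot, ht]⟩
    intro h
    have := congrFun h ⟨0, by omega⟩
    simp at this
  · obtain ⟨i, hi⟩ := exists_one ha
    obtain ⟨j, hj⟩ := exists_second hk i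
    refine ⟨Pi.single i 1, ?_, by rw [dot_single, hi, ht]⟩
    intro h
    have := congrFun h j
    rw [Pi.single_eq_of_ne hj] at this
    exact zero_ne_one this

lemma solve_gamma {k : ℕ} (hk : 2 ≤ k) {b : Fin k → ZMod 2} (hb : b ≠ 0) (t : ZMod 2) :
    ∃ γ, γ ≠ 0 ∧ dot b γ = t := by
  obtain ⟨i, hi⟩ := exists_one hb
  rcases zmod2_cases t with ht | ht
  · obtain ⟨j, hj⟩ := exists_second hk i
    by_cases hbj : b j = 0
    · refine ⟨Pi.single j 1, ?_, by rw [dot_single, hbj, ht]⟩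
      intro h
      have := congrFun h j
      simp at this
    · refine ⟨Pi.single i 1 + Pi.single j 1, ?_, ?_⟩
      · intro h
        have := congrFun h i
        simp [Pi.single_eq_of_ne (Ne.symm hj)] at this
      · rw [dot_add_right, dot_single, dot_single, hi, zmod2_ne hbj, ht]
        decide
  · refine ⟨Pi.single i 1, ?_, by rw [dot_single, hi, ht]⟩
    intro h
    have := congrFun h i
    simp at this

lemma helper_plain {k : ℕ} {b e : Fin k → ZMod 2} {j : Fin k}
    (hbj : b j = 1) (hej : e j = 0) (he : e ≠ 0) :
    ∃ γ, dot b γ = 1 ∧ dot e γ = 1 := by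
  obtain ⟨i, hi⟩ := exists_one he
  have hij : i ≠ j := by
    intro h; rw [h, hej] at hi; exact zero_ne_one hi
  by_cases hbi : b i = 0
  · refine ⟨Pi.single j 1 + Pi.single i 1, ?_, ?_⟩
    · rw [dot_add_right, dot_single, dot_single, hbj, hbi, add_zero]
    · rw [dot_add_right, dot_single, dot_single, hej, hi, zero_add]
  · exact ⟨Pi.single i 1, by rw [dot_single, zmod2_ne hbi],
      by rw [dot_single, hi]⟩

lemma two_plain {k : ℕ} {b e : Fin k → ZMod 2} (hb : b ≠ 0) (he : e ≠ 0) :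
    ∃ γ, dot b γ = 1 ∧ dot e γ = 1 := by
  by_cases hbe : b = e
  · obtain ⟨i, hi⟩ := exists_one hb
    subst hbe
    exact ⟨Pi.single i 1, by rw [dot_single, hi], by rw [dot_single, hi]⟩
  · obtain ⟨j, hj⟩ := Function.ne_iff.mp hbe
    rcases zmod2_cases (b j) with h1 | h1 <;> rcases zmod2_cases (e j) with h2 | h2
    · exact absurd (h1.trans h2.symm) hj
    · obtain ⟨γ, hg1, hg2⟩ := helper_plain h2 h1 hb
      exact ⟨γ, hg2, hg1⟩
    · exact helper_plain h1 h2 he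
    · exact absurd (h1.trans h2.symm) hj

lemma helper_avoid {k : ℕ} (hk : 2 < k) {a c : Fin k → ZMod 2} {j : Fin k}
    (haj : a j = 1) (hcj : c j = 0) (hc : c ≠ 0) :
    ∃ β, β ≠ (fun _ => 1) ∧ dot a β = 1 ∧ dot c β = 1 := by
  obtain ⟨i, hi⟩ := exists_one hc
  have hij : i ≠ j := by
    intro h; rw [h, hcj] at hi; exact absurd hi (by simp)
  by_cases hai : a i = 0
  · obtain ⟨r, hri, hrj⟩ := exists_third hk i j
    refine ⟨Pi.single j 1 + Pi.single i 1, ?_, ?_, ?_⟩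
    · intro h
      have := congrFun h r
      simp [Pi.single_eq_of_ne hrj, Pi.single_eq_of_ne hri] at this
    · rw [dot_add_right, dot_single, dot_single, haj, hai, add_zero]
    · rw [dot_add_right, dot_single, dot_single, hcj, hi, zero_add]
  · refine ⟨Pi.single i 1, ?_, by rw [dot_single, zmod2_ne hai],
      by rw [dot_single, hi]⟩
    intro h
    have := congrFun h j
    rw [Pi.single_eq_of_ne (Ne.symm hij)] at this
    exact zero_ne_one this

lemma two_avoid {k : ℕ} (hk : 2 < k) {a c : Fin k → ZMod 2} (ha : a ≠ 0) (hc : c ≠ 0) :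
    ∃ β, β ≠ (fun _ => 1) ∧ dot a β = 1 ∧ dot c β = 1 := by
  by_cases hac : a = c
  · obtain ⟨i, hi⟩ := exists_one ha
    obtain ⟨j, hj⟩ := exists_second (by omega) i
    subst hac
    refine ⟨Pi.single i 1, ?_, by rw [dot_single, hi], by rw [dot_single, hi]⟩
    intro h
    have := congrFun h j
    rw [Pi.single_eq_of_ne hj] at this
    exact zero_ne_one this
  · obtain ⟨j, hj⟩ := Function.ne_iff.mp hac
    rcases zmod2_cases (a j) with h1 | h1 <;> rcases zmod2_cases (c j) with h2 | h2
    · exact absurd (h1.trans h2.symm) hj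
    · obtain ⟨β, hb0, hb1, hb2⟩ := helper_avoid hk h2 h1 ha
      exact ⟨β, hb0, hb2, hb1⟩
    · exact helper_avoid hk h1 h2 hc
    · exact absurd (h1.trans h2.symm) hj

lemma main_lemma {m l : ℕ} (hm : 2 < m) (hl : 2 ≤ l)
    (a c : Fin m → ZMod 2) (b e : Fin l → ZMod 2)
    (h1 : a ≠ 0 ∨ b ≠ 0) (h2 : c ≠ 0 ∨ e ≠ 0) :
    ∃ β γ, β ≠ (fun _ => 1) ∧ γ ≠ 0 ∧
      dot a β + dot b γ = 1 ∧ dot c β + dot e γ = 1 := by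
  by_cases hb : b = 0 <;> by_cases he : e = 0
  · -- b = 0, e = 0
    have ha : a ≠ 0 := h1.resolve_right (by simp [hb])
    have hc : c ≠ 0 := h2.resolve_right (by simp [he])
    obtain ⟨β, hβ, hd1, hd2⟩ := two_avoid hm ha hc
    refine ⟨β, Pi.single ⟨0, by omega⟩ 1, hβ, ?_, ?_, ?_⟩
    · intro h
      have := congrFun h ⟨0, by omega⟩
      simp at this
    · rw [hb, dot_zero_left, add_zero, hd1]
    · rw [he, dot_zero_left, add_zero, hd2]
  · -- b = 0, e ≠ 0
    have ha : a ≠ 0 := h1.resolve_right (by simp [hb])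
    obtain ⟨β, hβ, hd1⟩ := solve_one (by omega) ha 1
    obtain ⟨γ, hγ, hd2⟩ := solve_gamma hl he (1 + dot c β)
    refine ⟨β, γ, hβ, hγ, ?_, ?_⟩
    · rw [hb, dot_zero_left, add_zero, hd1]
    · rw [hd2]
      have : ∀ x : ZMod 2, x + (1 + x) = 1 := by decide
      exact this _
  · -- b ≠ 0, e = 0
    have hc : c ≠ 0 := h2.resolve_right (by simp [he])
    obtain ⟨β, hβ, hd1⟩ := solve_one (by omega) hc 1
    obtain ⟨γ, hγ, hd2⟩ := solve_gamma hl hb (1 + dot a β)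
    refine ⟨β, γ, hβ, hγ, ?_, ?_⟩
    · rw [hd2]
      have : ∀ x : ZMod 2, x + (1 + x) = 1 := by decide
      exact this _
    · rw [he, dot_zero_left, add_zero, hd1]
  · -- b ≠ 0, e ≠ 0
    obtain ⟨γ, hg1, hg2⟩ := two_plain hb he
    refine ⟨0, γ, ?_, ?_, ?_, ?_⟩
    · intro h
      have := congrFun h ⟨0, by omega⟩
      simp at this
    · intro h
      rw [h, dot_zero_right] at hg1
      exact zero_ne_one hg1
    · rw [dot_zero_right, zero_add, hg1]
    · rw [dot_zero_right, zero_add, hg2]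

end D0aux


/-- For `m > 2` and `l ≥ 2`, the binary code `C(D_0)` is minimal. -/
theorem D0_minimal_of_two_lt (m l : ℕ) (hm : 2 < m) (hl : 2 ≤ l) :
    IsMinimalCode (D0 m l) := by
  intro x _hx x' hcov
  by_cases h0 : ∀ d ∈ D0 m l, dotp x' d = 0
  · exact Or.inl h0
  by_cases hx : ∀ d ∈ D0 m l, dotp x' d = dotp x d
  · exact Or.inr hx
  exfalso
  push_neg at h0 hx
  obtain ⟨d1, hd1D, hd1⟩ := h0
  obtain ⟨d2, hd2D, hd2⟩ := hx
  -- x' ≠ 0 componentwise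
  have h1 : x'.1 ≠ 0 ∨ x'.2 ≠ 0 := by
    by_contra h
    push_neg at h
    apply hd1
    simp [dotp, h.1, h.2]
  -- x + x' ≠ 0 componentwise
  have h2 : x.1 + x'.1 ≠ 0 ∨ x.2 + x'.2 ≠ 0 := by
    by_contra h
    push_neg at h
    have key : ∀ u v : ZMod 2, u + v = 0 → u = v := by decide
    have e1 : x.1 = x'.1 := by
      funext i
      exact key _ _ (by simpa using congrFun h.1 i)
    have e2 : x.2 = x'.2 := by
      funext i
      exact key _ _ (by simpa using congrFun h.2 i)
    apply hd2
    simp [dotp, ← e1, ← e2]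
  obtain ⟨β, γ, hβ, hγ, hq1, hq2⟩ :=
    D0aux.main_lemma hm hl x'.1 (x.1 + x'.1) x'.2 (x.2 + x'.2) h1 h2
  have hdD : (β, γ) ∈ D0 m l := ⟨hβ, hγ⟩
  have hx'd : dotp x' (β, γ) = 1 := by
    simpa [dotp, D0aux.dot] using hq1
  have hxd : dotp x (β, γ) = 0 := by
    have expand : dotp x (β, γ) + dotp x' (β, γ) = 1 := by
      rw [← hq2, D0aux.dot_add_left, D0aux.dot_add_left]
      simp only [dotp, D0aux.dot]
      ring
    rw [hx'd] at expand
    have : ∀ y : ZMod 2, y + 1 = 1 → y = 0 := by decide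
    exact this _ expand
  have := hcov (β, γ) hdD (by rw [hx'd]; exact one_ne_zero)
  exact this hxd
end

section
/- Let m = 2 and l ≥ 2 be integers and n = m + l. Then the binary linear code C(D_0) is not a minimal code, i.e., there exists a nonzero codeword of C(D_0) that is not minimal. -/
/-- For `m = 2` and `l ≥ 2`, the binary code `C(D_0)` is not minimal. -/
theorem D0_not_minimal_of_eq_two (m l : ℕ) (hm : m = 2) (hl : 2 ≤ l) :
    ¬ IsMinimalCode (D0 m l) := by
  subst hm
  intro h
  set j0 : Fin l := ⟨0, by omega⟩
  set e0 : Fin l → ZMod 2 := fun j => if j = j0 then 1 else 0 with he0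
  have he0ne : e0 ≠ 0 := by
    intro hc
    have := congrFun hc j0
    simp [he0] at this
  set x : (Fin 2 → ZMod 2) × (Fin l → ZMod 2) := (fun _ => 1, 0) with hx
  set x' : (Fin 2 → ZMod 2) × (Fin l → ZMod 2) :=
    (fun i => if i = 0 then 1 else 0, 0) with hx'
  have hdx : ∀ d, dotp x d = d.1 0 + d.1 1 := by
    intro d
    simp [dotp, hx, Fin.sum_univ_two]
  have hdx' : ∀ d, dotp x' d = d.1 0 := by
    intro d
    simp [dotp, hx', Fin.sum_univ_two]
  set d1 : (Fin 2 → ZMod 2) × (Fin l → ZMod 2) :=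
    (fun i => if i = 0 then 1 else 0, e0) with hd1
  set d2 : (Fin 2 → ZMod 2) × (Fin l → ZMod 2) :=
    (fun i => if i = 1 then 1 else 0, e0) with hd2
  have hd1D : d1 ∈ D0 2 l := by
    constructor
    · intro hc
      have := congrFun hc 1
      simp [hd1] at this
    · exact he0ne
  have hd2D : d2 ∈ D0 2 l := by
    constructor
    · intro hc
      have := congrFun hc 0
      simp [hd2] at this
    · exact he0ne
  have key := h x ⟨d1, hd1D, by rw [hdx]; simp [hd1]⟩ x' ?_
  · rcases key with hk | hk
    · have := hk d1 hd1D
      rw [hdx'] at this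
      simp [hd1] at this
    · have := hk d2 hd2D
      rw [hdx', hdx] at this
      simp [hd2] at this
  · intro d hd hne
    rw [hdx'] at hne
    rw [hdx]
    have h0 : d.1 0 = 1 := by
      have : ∀ a : ZMod 2, a ≠ 0 → a = 1 := by decide
      exact this _ hne
    have h1 : d.1 1 = 0 := by
      by_contra hc
      have h1' : d.1 1 = 1 := by
        have : ∀ a : ZMod 2, a ≠ 0 → a = 1 := by decide
        exact this _ hc
      apply hd.1
      funext i
      fin_cases i <;> simp [h0, h1']
    rw [h0, h1]
    decide
end

section
/- Let m ≥ 2 be an integer, l = 1, and n = m + 1. Then the binary linear code C(D_0) is not a minimal code, i.e., there exists a nonzero codeword of C(D_0) that is not minimal. -/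
lemma zmod2_cases (a : ZMod 2) : a = 0 ∨ a = 1 := by revert a; decide

/-- For `m ≥ 2` and `l = 1`, the binary code `C(D_0)` is not minimal. -/
theorem D0_not_minimal_of_l_eq_one (m l : ℕ) (hm : 2 ≤ m) (hl : l = 1) :
    ¬ IsMinimalCode (D0 m l) := by
  subst hl
  intro h
  have hm0 : 0 < m := by omega
  have hm1 : 1 < m := by omega
  -- x = (0, 1), x' = (e₀, 0)
  let x : (Fin m → ZMod 2) × (Fin 1 → ZMod 2) := (0, fun _ => 1)
  let x' : (Fin m → ZMod 2) × (Fin 1 → ZMod 2) := (fun j => if j = ⟨0, hm0⟩ then 1 else 0, 0)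
  have hdot : ∀ d ∈ D0 m 1, dotp x d = 1 := by
    intro d hd
    have h2 : d.2 0 = 1 := by
      rcases zmod2_cases (d.2 0) with h0 | h1
      · exact absurd (funext fun j => by fin_cases j; exact h0) hd.2
      · exact h1
    simp [dotp, x, Fin.sum_univ_one, h2]
  have hdot' : ∀ d : (Fin m → ZMod 2) × (Fin 1 → ZMod 2), dotp x' d = d.1 ⟨0, hm0⟩ := by
    intro d
    simp [dotp, x', Fin.sum_univ_one, ite_mul, Finset.sum_ite_eq]
  have hx0 : (⟨0, hm0⟩ : Fin m) ≠ ⟨1, hm1⟩ := by simp [Fin.ext_iff]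
  have hmem1 : ((fun j => if j = (⟨0, hm0⟩ : Fin m) then 1 else 0, fun _ => 1) :
      (Fin m → ZMod 2) × (Fin 1 → ZMod 2)) ∈ D0 m 1 := by
    refine ⟨fun hc => ?_, fun hc => ?_⟩
    · have := congrFun hc ⟨1, hm1⟩
      simp [hx0.symm] at this
    · have := congrFun hc 0
      simp at this
  have hmem0 : ((0, fun _ => 1) : (Fin m → ZMod 2) × (Fin 1 → ZMod 2)) ∈ D0 m 1 := by
    refine ⟨fun hc => ?_, fun hc => ?_⟩
    · have := congrFun hc ⟨0, hm0⟩
      simp at this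
    · have := congrFun hc 0
      simp at this
  have hne : (∃ d ∈ D0 m 1, dotp x d ≠ 0) := ⟨_, hmem0, by rw [hdot _ hmem0]; decide⟩
  have hcov : ∀ d ∈ D0 m 1, dotp x' d ≠ 0 → dotp x d ≠ 0 := by
    intro d hd _
    rw [hdot _ hd]; decide
  rcases h x hne x' hcov with h1 | h1
  · have := h1 _ hmem1
    rw [hdot'] at this
    simp at this
  · have := h1 _ hmem0
    rw [hdot', hdot _ hmem0] at this
    simp at this
end

section
/- Let m = 1 and l ≥ 1 be integers and n = 1 + l. Then the binary linear code C(D_0) is a minimal code, i.e., every nonzero codeword of C(D_0) is minimal. -/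
/-- For `m = 1` and `l ≥ 1`, the binary code `C(D_0)` is minimal. -/
theorem D0_minimal_of_m_eq_one (m l : ℕ) (hm : m = 1) (hl : 1 ≤ l) :
    IsMinimalCode (D0 m l) := by
  subst hm
  have one_of : ∀ a : ZMod 2, a ≠ 0 → a = 1 := by decide
  have key : ∀ (z : (Fin 1 → ZMod 2) × (Fin l → ZMod 2)) d, d ∈ D0 1 l →
      dotp z d = ∑ j, z.2 j * d.2 j := by
    intro z d hd
    have h1 : ∀ j : Fin 1, d.1 j = 0 := by
      intro j
      rcases (by decide : ∀ a : ZMod 2, a = 0 ∨ a = 1) (d.1 j) with h0 | h1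
      · exact h0
      · exact absurd (funext fun i => by rw [Subsingleton.elim i j]; exact h1) hd.1
    simp [dotp, h1]
  intro x _hx x' hcov
  have main : x'.2 = 0 ∨ x'.2 = x.2 := by
    by_contra hc
    push_neg at hc
    obtain ⟨hne0, hnex⟩ := hc
    by_cases hcase : ∃ j, x'.2 j ≠ 0 ∧ x.2 j = 0
    · obtain ⟨j, hj1, hj2⟩ := hcase
      set γ : Fin l → ZMod 2 := Pi.single j 1 with hγdef
      have hγ0 : γ ≠ 0 := by
        intro h
        have := congrFun h j
        simp [hγdef] at this
      have hd : (((fun _ => 0) : Fin 1 → ZMod 2), γ) ∈ D0 1 l := by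
        refine ⟨fun h => (zero_ne_one (α := ZMod 2)) (congrFun h 0), hγ0⟩
      have hsum : ∀ a : Fin l → ZMod 2, ∑ i, a i * γ i = a j := by
        intro a
        simp [hγdef, Pi.single_apply, mul_ite, Finset.sum_ite_eq']
      have h1 : dotp x' (((fun _ => 0) : Fin 1 → ZMod 2), γ) = x'.2 j := by
        rw [key _ _ hd]; exact hsum _
      have h2 : dotp x (((fun _ => 0) : Fin 1 → ZMod 2), γ) = x.2 j := by
        rw [key _ _ hd]; exact hsum _
      exact (hcov _ hd (by rw [h1]; exact hj1)) (by rw [h2]; exact hj2)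
    · push_neg at hcase
      have hk' : ∃ k, x'.2 k ≠ x.2 k := by
        by_contra h
        push_neg at h
        exact hnex (funext h)
      obtain ⟨k, hk⟩ := hk'
      have hj' : ∃ j, x'.2 j ≠ 0 := by
        by_contra h
        push_neg at h
        exact hne0 (funext h)
      obtain ⟨j, hj⟩ := hj'
      have hyk : x'.2 k = 0 := by
        by_contra h
        have h1 := one_of _ h
        have h2 := one_of _ (hcase k h)
        rw [h1, h2] at hk
        exact hk rfl
      have hxk : x.2 k = 1 := by
        apply one_of
        intro h
        rw [h, hyk] at hk
        exact hk rfl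
      have hxj : x.2 j = 1 := one_of _ (hcase j hj)
      have hyj : x'.2 j = 1 := one_of _ hj
      have hjk : j ≠ k := by
        intro h
        rw [h, hyk] at hj
        exact hj rfl
      set γ : Fin l → ZMod 2 := fun i => if i = j ∨ i = k then 1 else 0 with hγdef
      have hγ0 : γ ≠ 0 := by
        intro h
        have := congrFun h j
        simp [hγdef] at this
      have hd : (((fun _ => 0) : Fin 1 → ZMod 2), γ) ∈ D0 1 l := by
        refine ⟨fun h => (zero_ne_one (α := ZMod 2)) (congrFun h 0), hγ0⟩
      have hsum : ∀ a : Fin l → ZMod 2, ∑ i, a i * γ i = a j + a k := by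
        intro a
        have h1 : ∑ i ∈ ({j, k} : Finset (Fin l)), a i * γ i = ∑ i, a i * γ i := by
          refine Finset.sum_subset (Finset.subset_univ _) ?_
          intro i _ hi
          simp only [Finset.mem_insert, Finset.mem_singleton] at hi
          push_neg at hi
          simp [hγdef, hi.1, hi.2]
        rw [← h1, Finset.sum_pair hjk]
        simp [hγdef]
      have h1 : dotp x' (((fun _ => 0) : Fin 1 → ZMod 2), γ) = 1 := by
        rw [key _ _ hd, hsum, hyj, hyk]; ring
      have h2 : dotp x (((fun _ => 0) : Fin 1 → ZMod 2), γ) = 0 := by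
        rw [key _ _ hd, hsum, hxj, hxk]; decide
      exact (hcov _ hd (by rw [h1]; exact one_ne_zero)) h2
  rcases main with h | h
  · left
    intro d hd
    rw [key _ _ hd, h]
    simp
  · right
    intro d hd
    rw [key _ _ hd, key _ _ hd, h]
end

section
/- Let m = 2, l ≥ 2, and t ≥ 1 be integers, n = 2 + l, and let B_1, …, B_t be nonempty subsets of {1, …, l}. Then the binary linear code C(D) is a minimal code if and only if |B_i| < l for every 1 ≤ i ≤ t. -/
lemma zmod2_ne0 {x : ZMod 2} : x ≠ 0 ↔ x = 1 := by revert x; decide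

def eb (j : Fin 2) : Fin 2 → ZMod 2 := fun i => if i = j then 1 else 0

lemma eb_ne_one (j : Fin 2) : eb j ≠ fun _ => 1 := by revert j; decide

lemma dotp_eb {l : ℕ} (α : Fin 2 → ZMod 2) (u γ : Fin l → ZMod 2) (j : Fin 2) :
    dotp (α, u) (eb j, γ) = α j + ∑ i, u i * γ i := by
  fin_cases j <;> simp [dotp, eb, Fin.sum_univ_two]

lemma sum_ind1 {l : ℕ} (u : Fin l → ZMod 2) (j : Fin l) :
    ∑ i, u i * (fun i => if i = j then (1:ZMod 2) else 0) i = u j := by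
  simp [mul_ite]

lemma sum_ind2 {l : ℕ} (u : Fin l → ZMod 2) {j k : Fin l} (h : j ≠ k) :
    ∑ i, u i * (fun i => if i = j ∨ i = k then (1:ZMod 2) else 0) i = u j + u k := by
  have key : ∀ i, u i * (fun i => if i = j ∨ i = k then (1:ZMod 2) else 0) i
      = (if i = j then u i else 0) + (if i = k then u i else 0) := by
    intro i
    by_cases h1 : i = j
    · subst h1; simp [h]
    · by_cases h2 : i = k
      · subst h2; simp [h1, Ne.symm h]
      · simp [h1, h2]
  rw [Finset.sum_congr rfl (fun i _ => key i), Finset.sum_add_distrib]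
  simp

lemma exists_dot_one {l : ℕ} {u : Fin l → ZMod 2} (hu : u ≠ 0) :
    ∃ γ : Fin l → ZMod 2, γ ≠ 0 ∧ ∑ i, u i * γ i = 1 := by
  obtain ⟨j, hj⟩ := Function.ne_iff.mp hu
  refine ⟨fun i => if i = j then 1 else 0, ?_, ?_⟩
  · intro h; have := congrFun h j; simp at this
  · rw [sum_ind1]; exact zmod2_ne0.mp hj

lemma exists_dot_zero {l : ℕ} (hl : 2 ≤ l) (u : Fin l → ZMod 2) :
    ∃ γ : Fin l → ZMod 2, γ ≠ 0 ∧ ∑ i, u i * γ i = 0 := by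
  by_cases h : ∃ j, u j = 0
  · obtain ⟨j, hj⟩ := h
    refine ⟨fun i => if i = j then 1 else 0, ?_, ?_⟩
    · intro h; have := congrFun h j; simp at this
    · rw [sum_ind1]; exact hj
  · push_neg at h
    set j0 : Fin l := ⟨0, by omega⟩
    set j1 : Fin l := ⟨1, by omega⟩
    have hne : j0 ≠ j1 := by simp [j0, j1, Fin.ext_iff]
    refine ⟨fun i => if i = j0 ∨ i = j1 then 1 else 0, ?_, ?_⟩
    · intro hh; have := congrFun hh j0; simp at this
    · rw [sum_ind2 u hne, zmod2_ne0.mp (h j0), zmod2_ne0.mp (h j1)]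
      decide

lemma exists_dot_any {l : ℕ} (hl : 2 ≤ l) {u : Fin l → ZMod 2} (hu : u ≠ 0) (c : ZMod 2) :
    ∃ γ : Fin l → ZMod 2, γ ≠ 0 ∧ ∑ i, u i * γ i = c := by
  have hc : c = 0 ∨ c = 1 := by revert c; decide
  rcases hc with rfl | rfl
  · exact exists_dot_zero hl u
  · exact exists_dot_one hu

lemma exists_dot_one_one {l : ℕ} {f g : Fin l → ZMod 2} (hf : f ≠ 0) (hg : g ≠ 0) :
    ∃ γ : Fin l → ZMod 2, (∑ i, f i * γ i = 1) ∧ (∑ i, g i * γ i = 1) := by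
  obtain ⟨j, hj⟩ := Function.ne_iff.mp hf
  have hj1 : f j = 1 := zmod2_ne0.mp hj
  by_cases hgj : g j = 1
  · exact ⟨fun i => if i = j then 1 else 0, by rw [sum_ind1]; exact hj1,
      by rw [sum_ind1]; exact hgj⟩
  · have hgj0 : g j = 0 := by
      have h4 : g j = 0 ∨ g j = 1 := by generalize g j = x; revert x; decide
      tauto
    obtain ⟨k, hk⟩ := Function.ne_iff.mp hg
    have hk1 : g k = 1 := zmod2_ne0.mp hk
    have hjk : j ≠ k := by rintro rfl; rw [hgj0] at hk1; exact absurd hk1 (by decide)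
    by_cases hfk : f k = 1
    · exact ⟨fun i => if i = k then 1 else 0, by rw [sum_ind1]; exact hfk,
        by rw [sum_ind1]; exact hk1⟩
    · have hfk0 : f k = 0 := by
        have h4 : f k = 0 ∨ f k = 1 := by generalize f k = x; revert x; decide
        tauto
      refine ⟨fun i => if i = j ∨ i = k then 1 else 0, ?_, ?_⟩
      · rw [sum_ind2 f hjk, hj1, hfk0]; decide
      · rw [sum_ind2 g hjk, hgj0, hk1]; decide

lemma sum_add_dot {l : ℕ} (u u' γ : Fin l → ZMod 2) :
    ∑ i, (u + u') i * γ i = (∑ i, u i * γ i) + ∑ i, u' i * γ i := by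
  simp [add_mul, Finset.sum_add_distrib]

lemma cover_dot {l : ℕ} {u' u : Fin l → ZMod 2}
    (H : ∀ γ : Fin l → ZMod 2, γ ≠ 0 → (∑ i, u' i * γ i) = 1 → (∑ i, u i * γ i) = 1) :
    u' = 0 ∨ u' = u := by
  by_contra hc
  push_neg at hc
  obtain ⟨h0, hne⟩ := hc
  have hg : u + u' ≠ 0 := by
    intro h; apply hne; funext i
    have h2 := congrFun h i
    simp only [Pi.add_apply, Pi.zero_apply] at h2
    have h3 : ∀ a b : ZMod 2, a + b = 0 → b = a := by decide
    exact h3 _ _ h2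
  obtain ⟨γ, h1, h2⟩ := exists_dot_one_one h0 hg
  have hγ : γ ≠ 0 := by rintro rfl; simp at h1
  have h3 := H γ hγ h1
  rw [sum_add_dot, h3, h1] at h2
  exact absurd h2 (by decide)


/-- For `m = 2`, `l ≥ 2`, `t ≥ 1` and nonempty `B_1, …, B_t ⊆ {1,…,l}`,
the binary code `C(D)`, `D = D_0 ∪ D_1`, is minimal iff `|B_i| < l` for all `i`. -/
theorem D_minimal_iff_of_m_eq_two (m l t : ℕ) (hm : m = 2) (hl : 2 ≤ l) (ht : 1 ≤ t)
    (B : Fin t → Finset (Fin l)) (hB : ∀ i, (B i).Nonempty) :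
    IsMinimalCode (D0 m l ∪ D1 m B) ↔ ∀ i, (B i).card < l := by
  subst hm
  constructor
  · -- minimal → all |B i| < l
    intro hmin
    by_contra hc
    push_neg at hc
    obtain ⟨i0, hi0⟩ := hc
    have huniv : B i0 = Finset.univ := by
      apply Finset.eq_univ_of_card
      rw [Fintype.card_fin]
      refine le_antisymm ?_ hi0
      have := Finset.card_le_univ (B i0)
      simpa using this
    have hD1 : ∀ d, d ∉ D1 2 B := by
      rintro d ⟨_, h2⟩
      exact h2 i0 (by rw [huniv]; intro j _; simp)
    set γ0 : Fin l → ZMod 2 := (fun i => if i = (⟨0, by omega⟩ : Fin l) then 1 else 0) with hγ0def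
    have hγ0ne : γ0 ≠ 0 := by
      intro h; have := congrFun h ⟨0, by omega⟩; simp [γ0] at this
    set x : (Fin 2 → ZMod 2) × (Fin l → ZMod 2) := (fun _ => 1, 0) with hxdef
    set x' : (Fin 2 → ZMod 2) × (Fin l → ZMod 2) := (eb 0, 0) with hx'def
    have hd0mem : ((eb 0, γ0) : (Fin 2 → ZMod 2) × (Fin l → ZMod 2)) ∈ D0 2 l ∪ D1 2 B :=
      Or.inl ⟨eb_ne_one 0, hγ0ne⟩
    have hxne : ∃ d ∈ D0 2 l ∪ D1 2 B, dotp x d ≠ 0 := by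
      refine ⟨(eb 0, γ0), hd0mem, ?_⟩
      simp [dotp, x, eb, Fin.sum_univ_two]
    have hcov : ∀ d ∈ D0 2 l ∪ D1 2 B, dotp x' d ≠ 0 → dotp x d ≠ 0 := by
      rintro d hd hne
      rcases hd with hd | hd
      · obtain ⟨hb, hγ⟩ := hd
        have h1 : dotp x' d = d.1 0 := by simp [dotp, x', eb, Fin.sum_univ_two]
        rw [h1] at hne
        have hb0 : d.1 0 = 1 := zmod2_ne0.mp hne
        have hb1 : d.1 1 = 0 := by
          have h4 : d.1 1 = 0 ∨ d.1 1 = 1 := by generalize d.1 1 = y; revert y; decide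
          rcases h4 with h4 | h4
          · exact h4
          · exfalso; apply hb; funext i; fin_cases i <;> assumption
        have h5 : dotp x d = 1 := by simp [dotp, x, Fin.sum_univ_two, hb0, hb1]
        rw [h5]; decide
      · exact absurd hd (hD1 d)
    rcases hmin x hxne x' hcov with h | h
    · have := h (eb 0, γ0) hd0mem
      simp [dotp, x', eb, Fin.sum_univ_two] at this
    · have hd1mem : ((eb 1, γ0) : (Fin 2 → ZMod 2) × (Fin l → ZMod 2)) ∈ D0 2 l ∪ D1 2 B :=
        Or.inl ⟨eb_ne_one 1, hγ0ne⟩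
      have := h (eb 1, γ0) hd1mem
      simp [dotp, x, x', eb, Fin.sum_univ_two] at this
  · -- all |B i| < l → minimal
    intro hlt x hx x' Hcov
    by_cases h0 : ∀ d ∈ D0 2 l ∪ D1 2 B, dotp x' d = 0
    · exact Or.inl h0
    push_neg at h0
    have hx'ne : x' ≠ 0 := by
      rintro rfl
      obtain ⟨d, _, hd⟩ := h0
      apply hd; simp [dotp]
    right
    suffices hxx : x' = x by intro d _; rw [hxx]
    obtain ⟨α', u'⟩ := x'
    obtain ⟨α, u⟩ := x
    have H0 : ∀ γ : Fin l → ZMod 2, γ ≠ 0 → (∑ i, u' i * γ i) = 1 → (∑ i, u i * γ i) = 1 := by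
      intro γ hγ h1
      have hmem : ((fun _ => (0:ZMod 2), γ) : (Fin 2 → ZMod 2) × (Fin l → ZMod 2)) ∈
          D0 2 l ∪ D1 2 B := by
        refine Or.inl ⟨?_, hγ⟩
        intro h
        have hz : (0:ZMod 2) = 1 := congrFun h 0
        exact absurd hz (by decide)
      have hlhs : dotp (α', u') ((fun _ => (0:ZMod 2)), γ) = ∑ i, u' i * γ i := by simp [dotp]
      have hrhs : dotp (α, u) ((fun _ => (0:ZMod 2)), γ) = ∑ i, u i * γ i := by simp [dotp]
      have h2 := Hcov _ hmem (by rw [hlhs, h1]; decide)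
      rw [hrhs] at h2
      exact zmod2_ne0.mp h2
    by_cases hu'0 : u' = 0
    · -- Case A
      subst hu'0
      have hα' : α' ≠ 0 := by
        intro h; apply hx'ne; rw [h]; rfl
      have claim : ∀ j : Fin 2, α' j = 1 → (u = 0 ∧ α j = 1) := by
        intro j hj
        have key : ∀ γ : Fin l → ZMod 2, γ ≠ 0 → α j + ∑ i, u i * γ i = 1 := by
          intro γ hγ
          have hp : dotp (α', (0 : Fin l → ZMod 2)) (eb j, γ) ≠ 0 := by
            rw [dotp_eb]; simp [hj]
          have h2 := Hcov (eb j, γ) (Or.inl ⟨eb_ne_one j, hγ⟩) hp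
          rw [dotp_eb] at h2
          exact zmod2_ne0.mp h2
        obtain ⟨γz, hγz, hz⟩ := exists_dot_zero hl u
        have hαj : α j = 1 := by
          have := key γz hγz; rw [hz] at this; simpa using this
        refine ⟨?_, hαj⟩
        by_contra hu
        obtain ⟨γo, hγo, ho⟩ := exists_dot_one hu
        have hko := key γo hγo
        rw [ho, hαj] at hko
        exact absurd hko (by decide)
      obtain ⟨j0, hj0⟩ := Function.ne_iff.mp hα'
      have hj01 : α' j0 = 1 := zmod2_ne0.mp (by simpa using hj0)
      obtain ⟨hu0, _⟩ := claim j0 hj01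
      subst hu0
      have hle0 : α' 0 = 1 → α 0 = 1 := fun hj => (claim 0 hj).2
      have hle1 : α' 1 = 1 → α 1 = 1 := fun hj => (claim 1 hj).2
      by_cases hαα : α' = α
      · rw [hαα]
      · exfalso
        have hfacts : α 0 = 1 ∧ α 1 = 1 ∧ α' 0 + α' 1 = 1 := by
          have hgen : ∀ a b : Fin 2 → ZMod 2, a ≠ 0 → a ≠ b → (a 0 = 1 → b 0 = 1) →
              (a 1 = 1 → b 1 = 1) → (b 0 = 1 ∧ b 1 = 1 ∧ a 0 + a 1 = 1) := by decide
          exact hgen α' α hα' hαα hle0 hle1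
        have hmem1 : ((fun _ => (1:ZMod 2), fun _ => (1:ZMod 2)) :
            (Fin 2 → ZMod 2) × (Fin l → ZMod 2)) ∈ D0 2 l ∪ D1 2 B := by
          refine Or.inr ⟨rfl, ?_⟩
          intro i hsub
          have hBuniv : B i = Finset.univ :=
            Finset.eq_univ_iff_forall.mpr (fun j => hsub (by simp))
          have hli := hlt i
          rw [hBuniv, Finset.card_univ, Fintype.card_fin] at hli
          exact lt_irrefl _ hli
        have hprem : dotp (α', (0 : Fin l → ZMod 2))
            ((fun _ => (1:ZMod 2)), fun _ => (1:ZMod 2)) ≠ 0 := by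
          simp [dotp, Fin.sum_univ_two, hfacts.2.2]
        have hres := Hcov _ hmem1 hprem
        apply hres
        have h11 : (1:ZMod 2) + 1 = 0 := by decide
        simp [dotp, Fin.sum_univ_two, hfacts.1, hfacts.2.1, h11]
    · -- Case B
      rcases cover_dot H0 with h | h
      · exact absurd h hu'0
      subst h
      have hune : u' ≠ 0 := hu'0
      have key : ∀ j : Fin 2, α j = α' j := by
        intro j
        obtain ⟨γ, hγ, hcγ⟩ := exists_dot_any hl hune (1 + α' j)
        have hprem : dotp (α', u') (eb j, γ) ≠ 0 := by
          rw [dotp_eb, hcγ]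
          generalize α' j = a; revert a; decide
        have h2 := Hcov (eb j, γ) (Or.inl ⟨eb_ne_one j, hγ⟩) hprem
        rw [dotp_eb, hcγ] at h2
        have h3 := zmod2_ne0.mp h2
        revert h3
        generalize α j = a
        generalize α' j = b
        revert a b
        decide
      have hαeq : α = α' := funext key
      rw [hαeq]
end

section
/- Let m ≥ 2 and t ≥ 1 be integers, l = 1, n = m + 1, and let B_1, …, B_t be nonempty subsets of {1} (so each B_i = {1}). Then the binary linear code C(D) is not a minimal code, i.e., there exists a nonzero codeword of C(D) that is not minimal. -/
/-- For `m ≥ 2`, `l = 1`, `t ≥ 1` and nonempty `B_1, …, B_t ⊆ {1}`,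
the binary code `C(D)`, `D = D_0 ∪ D_1`, is not minimal. -/
theorem D_not_minimal_of_l_eq_one (m l t : ℕ) (hm : 2 ≤ m) (hl : l = 1) (ht : 1 ≤ t)
    (B : Fin t → Finset (Fin l)) (hB : ∀ i, (B i).Nonempty) :
    ¬ IsMinimalCode (D0 m l ∪ D1 m B) := by
  subst hl
  intro hmin
  set i0 : Fin m := ⟨0, by omega⟩ with hi0
  set i1 : Fin m := ⟨1, by omega⟩ with hi1
  -- x = (0, all-ones), x' = (e_{i0}, 0)
  have hd1 : ((0 : Fin m → ZMod 2), (fun _ => 1 : Fin 1 → ZMod 2)) ∈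
      (D0 m 1 ∪ D1 m B) := by
    left
    constructor
    · intro h
      have := congrFun h i0
      simp at this
    · intro h
      have := congrFun h 0
      simp at this
  have hd2 : ((Pi.single i0 1 : Fin m → ZMod 2), (fun _ => 1 : Fin 1 → ZMod 2)) ∈
      (D0 m 1 ∪ D1 m B) := by
    left
    constructor
    · intro h
      have := congrFun h i1
      have h01 : i1 ≠ i0 := by
        intro h; simp [hi0, hi1, Fin.ext_iff] at h
      simp [Pi.single_apply, h01] at this
    · intro h
      have := congrFun h 0
      simp at this
  have key := hmin ((0 : Fin m → ZMod 2), (fun _ => 1 : Fin 1 → ZMod 2))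
    ⟨_, hd1, by simp [dotp, Fin.sum_univ_one]⟩
    ((Pi.single i0 1 : Fin m → ZMod 2), (0 : Fin 1 → ZMod 2))
    (by
      intro d hd h
      simp [dotp, Fin.sum_univ_one] at h ⊢
      rcases hd with hd | hd
      · exact fun h0 => hd.2 (funext fun j => by fin_cases j; exact h0)
      · intro h0
        have := hd.2 ⟨0, ht⟩
        apply this
        intro j _
        exact (hB ⟨0, ht⟩).elim fun a ha => by fin_cases j; fin_cases a; exact ha)
  rcases key with h | h
  · have := h _ hd2
    simp [dotp, Pi.single_apply, Fin.sum_univ_one] at this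
  · have := h _ hd1
    simp [dotp, Pi.single_apply, Fin.sum_univ_one] at this
end

section
/- Let m = 1, l ≥ 1, and t ≥ 1 be integers, n = 1 + l, and let B_1, …, B_t be nonempty subsets of {1, …, l}. If there exists an index i_0 with 1 ≤ i_0 ≤ t such that |B_{i_0}| = l, then the binary linear code C(D) is a minimal code, i.e., every nonzero codeword of C(D) is minimal. -/
lemma zmod2_cases_s12 : ∀ x : ZMod 2, x = 0 ∨ x = 1 := by decide

lemma ker_lemma (l : ℕ) (a b : Fin l → ZMod 2)
    (h : ∀ γ : Fin l → ZMod 2, γ ≠ 0 → (∑ k, a k * γ k) = 0 → (∑ k, b k * γ k) = 0) :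
    b = 0 ∨ b = a := by
  have single_ne : ∀ j : Fin l, (Pi.single j 1 : Fin l → ZMod 2) ≠ 0 := by
    intro j hj
    have := congrFun hj j
    simp at this
  have dot_single : ∀ (c : Fin l → ZMod 2) (j : Fin l),
      (∑ k, c k * (Pi.single j 1 : Fin l → ZMod 2) k) = c j := by
    intro c j
    simp [Pi.single_apply, mul_ite, Finset.sum_ite_eq']
  by_cases ha : a = 0
  · left
    funext j
    have := h (Pi.single j 1 : Fin l → ZMod 2) (single_ne j) (by simp [ha, dot_single])
    simpa [dot_single] using this
  · obtain ⟨j0, hj0⟩ : ∃ j0, a j0 ≠ 0 := by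
      by_contra hc
      push_neg at hc
      exact ha (funext hc)
    have hj0' : a j0 = 1 := (zmod2_cases_s12 (a j0)).resolve_left hj0
    have key : ∀ j, b j = a j * b j0 := by
      intro j
      by_cases hj : j = j0
      · subst hj; rw [hj0', one_mul]
      · set γ : Fin l → ZMod 2 :=
          fun k => (if k = j then 1 else 0) + a j * (if k = j0 then 1 else 0) with hγ
        have hγne : γ ≠ 0 := by
          intro hz
          have := congrFun hz j
          simp [hγ, hj] at this
        have dotγ : ∀ c : Fin l → ZMod 2,
            (∑ k, c k * γ k) = c j + a j * c j0 := by
          intro c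
          have e1 : (∑ k, c k * (if k = j then 1 else 0)) = c j := by
            simp [mul_ite, Finset.sum_ite_eq']
          have e2 : (∑ k, c k * (a j * (if k = j0 then 1 else 0))) = a j * c j0 := by
            simp [mul_ite, Finset.sum_ite_eq', mul_comm]
          calc (∑ k, c k * γ k)
              = (∑ k, c k * (if k = j then 1 else 0))
                + ∑ k, c k * (a j * (if k = j0 then 1 else 0)) := by
                simp [hγ, mul_add, Finset.sum_add_distrib]
            _ = c j + a j * c j0 := by rw [e1, e2]
        have ha0 : (∑ k, a k * γ k) = 0 := by
          rw [dotγ, hj0', mul_one, CharTwo.add_self_eq_zero]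
        have hb0 := h γ hγne ha0
        rw [dotγ] at hb0
        exact eq_of_sub_eq_zero (by rw [CharTwo.sub_eq_add]; exact hb0)
    rcases zmod2_cases_s12 (b j0) with h0 | h1
    · left; funext j; simp [key j, h0]
    · right; funext j; simp [key j, h1]



/-- For `m = 1`, `l ≥ 1`, `t ≥ 1` and nonempty `B_1, …, B_t ⊆ {1,…,l}`:
if some `|B_{i₀}| = l`, then the binary code `C(D)`, `D = D_0 ∪ D_1`, is minimal. -/
theorem D_minimal_of_m_eq_one_full (m l t : ℕ) (hm : m = 1) (hl : 1 ≤ l) (ht : 1 ≤ t)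
    (B : Fin t → Finset (Fin l)) (hB : ∀ i, (B i).Nonempty)
    (hfull : ∃ i₀, (B i₀).card = l) :
    IsMinimalCode (D0 m l ∪ D1 m B) := by
  subst hm
  obtain ⟨i₀, hi₀⟩ := hfull
  -- D1 is empty
  have hBuniv : B i₀ = Finset.univ := Finset.eq_univ_of_card _ (by simpa using hi₀)
  have hD1 : ∀ d : (Fin 1 → ZMod 2) × (Fin l → ZMod 2), d ∉ D1 1 B := by
    rintro d ⟨_, h2⟩
    exact h2 i₀ (by rw [hBuniv]; simp)
  -- on D0 (m = 1) the first coordinate of d is 0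
  have hfirst : ∀ d ∈ D0 1 l, d.1 = 0 := by
    rintro d ⟨h1, _⟩
    funext j
    rcases zmod2_cases_s12 (d.1 j) with h | h
    · exact h
    · exact absurd (funext fun k => by rwa [Subsingleton.elim k j]) h1
  have hdot : ∀ (x d : (Fin 1 → ZMod 2) × (Fin l → ZMod 2)), d ∈ D0 1 l →
      dotp x d = ∑ k, x.2 k * d.2 k := by
    intro x d hd
    unfold dotp
    rw [hfirst d hd]
    simp
  intro x _ x' hcov
  have hker : ∀ γ : Fin l → ZMod 2, γ ≠ 0 →
      (∑ k, x.2 k * γ k) = 0 → (∑ k, x'.2 k * γ k) = 0 := by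
    intro γ hγ h0
    have hmem : ((0, γ) : (Fin 1 → ZMod 2) × (Fin l → ZMod 2)) ∈ D0 1 l := by
      refine ⟨?_, hγ⟩
      intro hc
      have := congrFun hc 0
      simp at this
    by_contra hne
    have := hcov (0, γ) (Or.inl hmem) (by rwa [hdot x' _ hmem])
    rw [hdot x _ hmem] at this
    exact this h0
  rcases ker_lemma l x.2 x'.2 hker with h0 | heq
  · left
    rintro d (hd | hd)
    · rw [hdot x' d hd, show x'.2 = 0 from h0]; simp
    · exact absurd hd (hD1 d)
  · right
    rintro d (hd | hd)
    · rw [hdot x' d hd, hdot x d hd, heq]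
    · exact absurd hd (hD1 d)
end

section
/- Let m = 1, l ≥ 1, and t ≥ 1 be integers, n = 1 + l, and let B_1, …, B_t be nonempty subsets of {1, …, l}. If |B_i| ≤ l − 1 for every 1 ≤ i ≤ t and there exists an index i_0 with |B_{i_0}| = l − 1, then the binary linear code C(D) is not a minimal code, i.e., there exists a nonzero codeword of C(D) that is not minimal. -/
/-!
With `m = 1` and `B_{i₀}ᶜ = {j₀}`, compare the codewords `c(x)` of `x = (0, e_{j₀})` and
`c(x')` of `x' = (1, 0)`. On `D_0` the first coordinate is `0`, so `c(x')` vanishes there; on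
`D_1` it is `1`, and the support of `γ` must leave `B_{i₀}`, i.e. contain `j₀`, so `c(x)` is `1`
there too. Hence `c(x)` covers `c(x')`. Now `c(x') ≠ 0`, as `((1), (1,…,1)) ∈ D_1` because no
`B_i` is all of `{1, …, l}`, and `c(x') ≠ c(x)`, as they differ at `(0, e_{j₀}) ∈ D_0`.
-/

open Finset

theorem ZMod.eq_one_of_ne_zero {a : ZMod 2} (ha : a ≠ 0) : a = 1 := by
  fin_cases a
  · exact absurd rfl ha
  · rfl

section Codewords

variable {m l : ℕ}

theorem not_isMinimalCode_of_covers {D : Set ((Fin m → ZMod 2) × (Fin l → ZMod 2))}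
    {x x' d₁ d₂ : (Fin m → ZMod 2) × (Fin l → ZMod 2)}
    (hcov : ∀ d ∈ D, dotp x' d ≠ 0 → dotp x d ≠ 0)
    (hd₁ : d₁ ∈ D) (hx'd₁ : dotp x' d₁ ≠ 0)
    (hd₂ : d₂ ∈ D) (hne : dotp x' d₂ ≠ dotp x d₂) : ¬ IsMinimalCode D := by
  intro hmin
  rcases hmin x ⟨d₁, hd₁, hcov d₁ hd₁ hx'd₁⟩ x' hcov with hzero | heq
  · exact hx'd₁ (hzero d₁ hd₁)
  · exact hne (heq d₂ hd₂)

@[simp]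
theorem dotp_zero_single (j : Fin l) (d : (Fin m → ZMod 2) × (Fin l → ZMod 2)) :
    dotp (0, Pi.single j 1) d = d.2 j := by
  simp [dotp, Pi.single_apply]

@[simp]
theorem dotp_one_zero (d : (Fin m → ZMod 2) × (Fin l → ZMod 2)) :
    dotp (fun _ => 1, 0) d = ∑ i, d.1 i := by
  simp [dotp]

theorem zero_single_mem_D0 [NeZero m] (j : Fin l) :
    ((0 : Fin m → ZMod 2), Pi.single j (1 : ZMod 2)) ∈ D0 m l :=
  ⟨fun h => zero_ne_one (α := ZMod 2) (congrFun h (0 : Fin m)),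
    fun h => one_ne_zero (α := ZMod 2) (by simpa using congrFun h j)⟩

theorem fst_eq_zero_of_mem_D0_one {d : (Fin 1 → ZMod 2) × (Fin l → ZMod 2)} (hd : d ∈ D0 1 l) :
    d.1 0 = 0 := by
  by_contra h
  exact hd.1 (funext fun i => Subsingleton.elim i 0 ▸ ZMod.eq_one_of_ne_zero h)

variable {t : ℕ} {B : Fin t → Finset (Fin l)}

theorem const_one_mem_D1 (hB : ∀ i, B i ≠ univ) :
    ((fun _ => 1 : Fin m → ZMod 2), (fun _ => 1 : Fin l → ZMod 2)) ∈ D1 m B :=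
  ⟨rfl, fun i hsub => hB i (eq_univ_of_forall fun _ => hsub (one_ne_zero : (1 : ZMod 2) ≠ 0))⟩

theorem snd_ne_zero_of_mem_D1 {i : Fin t} {j : Fin l} (hBi : (B i)ᶜ = {j})
    {d : (Fin m → ZMod 2) × (Fin l → ZMod 2)} (hd : d ∈ D1 m B) : d.2 j ≠ 0 := by
  obtain ⟨k, hk, hkB⟩ := Set.not_subset.mp (hd.2 i)
  have hkj : k ∈ (B i)ᶜ := mem_compl.mpr hkB
  rw [hBi, mem_singleton] at hkj
  exact hkj ▸ hk

end Codewords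

theorem Finset.exists_compl_eq_singleton {l : ℕ} {s : Finset (Fin l)} (hl : 1 ≤ l)
    (hs : #s = l - 1) : ∃ j, sᶜ = {j} :=
  card_eq_one.mp (by rw [card_compl, Fintype.card_fin]; omega)

theorem Finset.ne_univ_of_card_le {l : ℕ} {s : Finset (Fin l)} (hl : 1 ≤ l)
    (hs : #s ≤ l - 1) : s ≠ univ := by
  rintro rfl
  rw [card_univ, Fintype.card_fin] at hs
  omega

theorem D_not_minimal_of_m_eq_one_general (m l t : ℕ) (hm : m = 1) (hl : 1 ≤ l)
    (B : Fin t → Finset (Fin l))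
    (hle : ∀ i, (B i).card ≤ l - 1) (hex : ∃ i₀, (B i₀).card = l - 1) :
    ¬ IsMinimalCode (D0 m l ∪ D1 m B) := by
  subst hm
  obtain ⟨i₀, hi₀⟩ := hex
  obtain ⟨j₀, hj₀⟩ := exists_compl_eq_singleton hl hi₀
  have hcov : ∀ d ∈ D0 1 l ∪ D1 1 B,
      dotp (fun _ => 1, 0) d ≠ 0 → dotp (0, Pi.single j₀ 1) d ≠ 0 := by
    rintro d (hd | hd) hd₁
    · simp [fst_eq_zero_of_mem_D0_one hd] at hd₁
    · simpa using snd_ne_zero_of_mem_D1 hj₀ hd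
  refine not_isMinimalCode_of_covers hcov
    (Or.inr (const_one_mem_D1 fun i => ne_univ_of_card_le hl (hle i))) (by simp)
    (Or.inl (zero_single_mem_D0 j₀)) (by simp)

/-- For `m = 1`, `l ≥ 1`, `t ≥ 1` and nonempty `B_1, …, B_t ⊆ {1,…,l}`:
if `|B_i| ≤ l - 1` for all `i` and some `|B_{i₀}| = l - 1`, then the binary code
`C(D)`, `D = D_0 ∪ D_1`, is not minimal. -/
theorem D_not_minimal_of_m_eq_one (m l t : ℕ) (hm : m = 1) (hl : 1 ≤ l) (ht : 1 ≤ t)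
    (B : Fin t → Finset (Fin l)) (hB : ∀ i, (B i).Nonempty)
    (hle : ∀ i, (B i).card ≤ l - 1) (hex : ∃ i₀, (B i₀).card = l - 1) :
    ¬ IsMinimalCode (D0 m l ∪ D1 m B) :=
  D_not_minimal_of_m_eq_one_general m l t hm hl B hle hex
end

section
/- Let m = 1, l ≥ 1, and t ≥ 1 be integers, n = 1 + l, and let B_1, …, B_t be nonempty subsets of {1, …, l}. If |B_i| < l − 1 for every 1 ≤ i ≤ t, then the binary linear code C(D) is a minimal code, i.e., every nonzero codeword of C(D) is minimal. -/
/- ------------------ auxiliary lemmas ------------------ -/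

lemma zc (v : ZMod 2) : v = 0 ∨ v = 1 := by revert v; decide

lemma zadd (u v : ZMod 2) (h : u + v ≠ 0) : v = 1 + u := by revert h; revert u v; decide

def esgl {l : ℕ} (j : Fin l) : Fin l → ZMod 2 := fun k => if k = j then 1 else 0

lemma ip_single {l : ℕ} (c : Fin l → ZMod 2) (j : Fin l) :
    (∑ k, c k * esgl j k) = c j := by
  simp [esgl, mul_ite]

lemma ip_add {l : ℕ} (c γ1 γ2 : Fin l → ZMod 2) :
    (∑ k, c k * (γ1 + γ2) k) = (∑ k, c k * γ1 k) + (∑ k, c k * γ2 k) := by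
  simp [mul_add, Finset.sum_add_distrib]

lemma single_ne_zero' {l : ℕ} (j : Fin l) : esgl j ≠ 0 := by
  intro h
  have := congrFun h j
  simp [esgl] at this

lemma exists_not_mem_of_card_lt {l : ℕ} (s : Finset (Fin l)) (h : s.card < l) :
    ∃ k, k ∉ s := by
  by_contra hc
  push_neg at hc
  have hs : s = Finset.univ := Finset.eq_univ_of_forall hc
  subst hs
  simp at h

/-- Separation: if `b ≠ 0` and `b ≠ a` there is `γ ≠ 0` with `⟨a,γ⟩ = 0`, `⟨b,γ⟩ = 1`. -/
lemma exists_sep {l : ℕ} (a b : Fin l → ZMod 2) (hb : b ≠ 0) (hab : b ≠ a) :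
    ∃ γ : Fin l → ZMod 2, γ ≠ 0 ∧ (∑ k, a k * γ k) = 0 ∧ (∑ k, b k * γ k) = 1 := by
  by_cases ha : a = 0
  · obtain ⟨j, hj⟩ := Function.ne_iff.mp hb
    have hbj : b j = 1 := (zc (b j)).resolve_left (by simpa using hj)
    exact ⟨esgl j, single_ne_zero' j, by rw [ip_single]; simp [ha],
      by rw [ip_single, hbj]⟩
  · obtain ⟨j, hj⟩ := Function.ne_iff.mp hab
    rcases zc (a j) with haj | haj
    · have hbj : b j = 1 := by
        rcases zc (b j) with h | h
        · exact absurd (h.trans haj.symm) hj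
        · exact h
      exact ⟨esgl j, single_ne_zero' j, by rw [ip_single, haj],
        by rw [ip_single, hbj]⟩
    · have hbj : b j = 0 := by
        rcases zc (b j) with h | h
        · exact h
        · exact absurd (h.trans haj.symm) hj
      obtain ⟨k, hk⟩ := Function.ne_iff.mp hb
      have hbk : b k = 1 := (zc (b k)).resolve_left (by simpa using hk)
      have hkj : k ≠ j := by
        intro h; rw [h, hbj] at hbk; exact one_ne_zero hbk.symm
      rcases zc (a k) with hak | hak
      · exact ⟨esgl k, single_ne_zero' k, by rw [ip_single, hak],
          by rw [ip_single, hbk]⟩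
      · refine ⟨esgl j + esgl k, ?_, ?_, ?_⟩
        · intro h
          have := congrFun h j
          simp [esgl, Ne.symm hkj] at this
        · rw [ip_add, ip_single, ip_single, haj, hak]; decide
        · rw [ip_add, ip_single, ip_single, hbj, hbk]; decide

/-- The all-ones vector has support not contained in any `B i`. -/
lemma one_mem_G {l t : ℕ} (B : Fin t → Finset (Fin l))
    (hlt : ∀ i, (B i).card < l - 1) :
    ∀ i, ¬ ({k | (fun _ : Fin l => (1 : ZMod 2)) k ≠ 0} ⊆ ↑(B i)) := by
  intro i hsub
  obtain ⟨k, hk⟩ := exists_not_mem_of_card_lt (B i)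
    (lt_of_lt_of_le (hlt i) (Nat.sub_le l 1))
  exact hk (hsub (by simp))

/-- `⟨a,·⟩` is not constant on the set of vectors with support not in any `B i`. -/
lemma not_const {l t : ℕ} (B : Fin t → Finset (Fin l))
    (hlt : ∀ i, (B i).card < l - 1) (a : Fin l → ZMod 2) (ha : a ≠ 0) (c : ZMod 2)
    (h : ∀ γ : Fin l → ZMod 2, (∀ i, ¬ ({k | γ k ≠ 0} ⊆ ↑(B i))) →
      (∑ k, a k * γ k) = c) : False := by
  obtain ⟨j, hj⟩ := Function.ne_iff.mp ha
  have h2 : ∀ i, ¬ ({k | ((fun _ : Fin l => (1 : ZMod 2)) + esgl j) k ≠ 0} ⊆ ↑(B i)) := by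
    intro i hsub
    have hcard : (insert j (B i)).card < l := by
      have h1 := Finset.card_insert_le j (B i)
      have h2 := hlt i
      omega
    obtain ⟨k, hk⟩ := exists_not_mem_of_card_lt _ hcard
    have hkj : k ≠ j := fun h => hk (h ▸ Finset.mem_insert_self j (B i))
    have hkB : k ∉ B i := fun h => hk (Finset.mem_insert_of_mem h)
    apply hkB
    apply hsub
    show ((fun _ : Fin l => (1 : ZMod 2)) + esgl j) k ≠ 0
    simp [esgl, hkj]
  have e1 := h _ (one_mem_G B hlt)
  have e2 := h _ h2
  rw [ip_add, ip_single, e1] at e2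
  have : a j = 0 := by
    have := add_left_cancel (a := c) (b := a j) (c := 0) (by rw [add_zero]; exact e2)
    exact this
  exact hj this

/-- For `m = 1`, `l ≥ 1`, `t ≥ 1` and nonempty `B_1, …, B_t ⊆ {1,…,l}`:
if `|B_i| < l - 1` for all `i`, then the binary code `C(D)`, `D = D_0 ∪ D_1`,
is minimal. -/
theorem D_minimal_of_m_eq_one_small (m l t : ℕ) (hm : m = 1) (hl : 1 ≤ l) (ht : 1 ≤ t)
    (B : Fin t → Finset (Fin l)) (hB : ∀ i, (B i).Nonempty)
    (hlt : ∀ i, (B i).card < l - 1) :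
    IsMinimalCode (D0 m l ∪ D1 m B) := by
  subst hm
  intro x _hx x' hcov
  have hd : ∀ (y d : (Fin 1 → ZMod 2) × (Fin l → ZMod 2)),
      dotp y d = y.1 0 * d.1 0 + ∑ k, y.2 k * d.2 k := by
    intro y d; simp [dotp, Fin.sum_univ_one]
  have hzno : (fun _ : Fin 1 => (0 : ZMod 2)) ≠ fun _ => 1 := by
    intro h; exact zero_ne_one (congrFun h 0)
  -- covering conditions on D0 and D1 parts
  have H0 : ∀ γ : Fin l → ZMod 2, γ ≠ 0 →
      (∑ k, x'.2 k * γ k) ≠ 0 → (∑ k, x.2 k * γ k) ≠ 0 := by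
    intro γ hγ h
    have := hcov ((fun _ => 0), γ) (Or.inl ⟨hzno, hγ⟩) (by rw [hd]; simpa using h)
    rw [hd] at this; simpa using this
  have H1 : ∀ γ : Fin l → ZMod 2, (∀ i, ¬ ({k | γ k ≠ 0} ⊆ ↑(B i))) →
      x'.1 0 + (∑ k, x'.2 k * γ k) ≠ 0 → x.1 0 + (∑ k, x.2 k * γ k) ≠ 0 := by
    intro γ hγ h
    have := hcov ((fun _ => 1), γ) (Or.inr ⟨rfl, hγ⟩) (by rw [hd]; simpa using h)
    rw [hd] at this; simpa using this
  have hG1 := one_mem_G B hlt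
  -- Step 1: x'.2 = 0 or x'.2 = x.2
  have step1 : x'.2 = 0 ∨ x'.2 = x.2 := by
    by_contra hc
    push_neg at hc
    obtain ⟨γ, hγ0, hA, hB'⟩ := exists_sep x.2 x'.2 hc.1 hc.2
    exact H0 γ hγ0 (by rw [hB']; exact one_ne_zero) hA
  rcases step1 with h2' | h2'
  · -- x'.2 = 0
    rcases zc (x'.1 0) with hs' | hs'
    · left
      intro d _
      rw [hd, h2', hs']; simp
    · -- x'.1 0 = 1
      have key : ∀ γ : Fin l → ZMod 2, (∀ i, ¬ ({k | γ k ≠ 0} ⊆ ↑(B i))) →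
          (∑ k, x.2 k * γ k) = 1 + x.1 0 := by
        intro γ hγ
        exact zadd _ _ (H1 γ hγ (by simp [h2', hs']))
      by_cases ha : x.2 = 0
      · have e := key _ hG1
        simp [ha] at e
        have hs : x.1 0 = 1 := by
          rcases zc (x.1 0) with h | h
          · rw [h] at e; exact absurd e.symm one_ne_zero
          · exact h
        right
        intro d _
        rw [hd, hd, h2', hs', ha, hs]
      · exact absurd key (fun h => not_const B hlt x.2 ha (1 + x.1 0) h)
  · -- x'.2 = x.2
    rcases zc (x'.1 0) with hs' | hs' <;> rcases zc (x.1 0) with hs | hs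
    · right; intro d _; rw [hd, hd, h2', hs', hs]
    · -- s' = 0, s = 1
      have key : ∀ γ : Fin l → ZMod 2, (∀ i, ¬ ({k | γ k ≠ 0} ⊆ ↑(B i))) →
          (∑ k, x.2 k * γ k) = 1 + x.1 0 := by
        intro γ hγ
        have h1' := H1 γ hγ
        rw [h2', hs', hs] at h1'
        rcases zc (∑ k, x.2 k * γ k) with h' | h'
        · rw [h', hs]; decide
        · exfalso
          have := h1' (by rw [h']; decide)
          rw [h'] at this
          exact this (by decide)
      by_cases ha : x.2 = 0
      · left
        intro d _
        rw [hd, h2', ha, hs']; simp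
      · exact absurd key (fun h => not_const B hlt x.2 ha (1 + x.1 0) h)
    · -- s' = 1, s = 0
      have key : ∀ γ : Fin l → ZMod 2, (∀ i, ¬ ({k | γ k ≠ 0} ⊆ ↑(B i))) →
          (∑ k, x.2 k * γ k) = 1 + x.1 0 := by
        intro γ hγ
        have h1' := H1 γ hγ
        rw [h2', hs', hs] at h1'
        rcases zc (∑ k, x.2 k * γ k) with h' | h'
        · exfalso
          have := h1' (by rw [h']; decide)
          rw [h'] at this
          exact this (by decide)
        · rw [h', hs]; decide
      by_cases ha : x.2 = 0
      · exfalso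
        have e := key _ hG1
        simp [ha, hs] at e
      · exact absurd key (fun h => not_const B hlt x.2 ha (1 + x.1 0) h)
    · right; intro d _; rw [hd, hd, h2', hs', hs]
end
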